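/- Let K ≥ 2, α ∈ (0,1], γ ∈ (0,1], and let F be the tightness function on the ground set V = {s_1,…,s_K} ∪ {ω_1,…,ω_K}. Write S^{t−1} := {s_1,…,s_{t−1}} for t = 1,…,K. Then: (i) for every t ∈ {1,…,K}, F(S^{t−1} ∪ {s_t}) − F(S^{t−1}) = ξ_t, F(S^{t−1} ∪ {ω_j}) − F(S^{t−1}) = ξ_t for every j ∈ {1,…,K}, and F(S^{t−1} ∪ {s_j}) − F(S^{t−1}) = ξ_j ≤ ξ_t for every j ≥ t (so the chain S⁰ ⊂ S¹ ⊂ ⋯ ⊂ S^K = {s_1,…,s_K} is a valid greedy sequence for F); (ii) F({s_1,…,s_K}) = (1/(αγ))·(1 − ((K − αγ)/K)^K) and F({ω_1,…,ω_K}) = 1/γ, so F({s_1,…,s_K}) / F({ω_1,…,ω_K}) = (1/α)·(1 − ((K − αγ)/K)^K), matching the greedy approximation guarantee exactly. -/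

import Mathlib

/-!
Along the chain `S^t = {s_1,…,s_t}` no `ω` has been chosen, so `F(S^t) = Σ_{i ≤ t} ξ_i` and adding
`s_j` gains exactly `ξ_j`. Adding one `ω_j` gains `f(1)/K · (1 − αγ Σ_{i ≤ t} ξ_i)`, and since
`αγ/K = 1 − q` with `q = (K − αγ)/K`, the geometric sum telescopes to `1 − αγ Σ_{i ≤ t} ξ_i = q^t`,
so this gain is `q^t/K = ξ_{t+1}` as well. The values at `{s_1,…,s_K}` and `{ω_1,…,ω_K}` are
the geometric sum and `f(K)/K = 1/γ`.
-/

open Finset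

/-- 0-indexed: `xi K α γ i` is the paper's `ξ_{i+1}`. -/
noncomputable def xi (K : ℕ) (α γ : ℝ) (i : Fin K) : ℝ :=
  (1 / (K : ℝ)) * (((K : ℝ) - γ * α) / (K : ℝ)) ^ (i : ℕ)

noncomputable def fconv (K : ℕ) (γ : ℝ) (x : ℝ) : ℝ :=
  ((γ⁻¹ - 1) / ((K : ℝ) - 1)) * x ^ 2 + (((K : ℝ) - γ⁻¹) / ((K : ℝ) - 1)) * x

/-- The tightness function on the ground set `V = {s_1,…,s_K} ∪ {ω_1,…,ω_K}`,
modeled as `Fin K ⊕ Fin K` with `Sum.inl i = s_{i+1}` and `Sum.inr i = ω_{i+1}`. -/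
noncomputable def tightF (K : ℕ) (α γ : ℝ) (T : Finset (Fin K ⊕ Fin K)) : ℝ :=
  (fconv K γ (((Finset.univ.filter (fun i : Fin K => Sum.inr i ∈ T)).card : ℝ)) / (K : ℝ)) *
      (1 - α * γ * ∑ i ∈ Finset.univ.filter (fun i : Fin K => Sum.inl i ∈ T), xi K α γ i) +
    ∑ i ∈ Finset.univ.filter (fun i : Fin K => Sum.inl i ∈ T), xi K α γ i

/-- The paper's `S^t = {s_1,…,s_t}`, i.e. `{inl i | i < t}` in the 0-indexed encoding. -/
def Schain (K : ℕ) (t : ℕ) : Finset (Fin K ⊕ Fin K) :=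
  (Finset.univ.filter (fun i : Fin K => (i : ℕ) < t)).image Sum.inl

section

variable {K : ℕ} {α γ : ℝ}

lemma fconv_zero (K : ℕ) (γ : ℝ) : fconv K γ 0 = 0 := by
  simp [fconv]

lemma fconv_one (hK : K ≠ 1) : fconv K γ 1 = 1 := by
  have hK1 : (K : ℝ) - 1 ≠ 0 := sub_ne_zero.mpr (by exact_mod_cast hK)
  simp only [fconv]
  field_simp
  ring

lemma fconv_natCast_self (hK : K ≠ 1) : fconv K γ K = K * γ⁻¹ := by
  have hK1 : (K : ℝ) - 1 ≠ 0 := sub_ne_zero.mpr (by exact_mod_cast hK)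
  simp only [fconv]
  field_simp
  ring

lemma xi_antitone (hαγ0 : 0 ≤ γ * α) (hαγK : γ * α ≤ K) : Antitone (xi K α γ) := by
  intro i j hij
  have hq0 : 0 ≤ ((K : ℝ) - γ * α) / K := div_nonneg (by linarith) (by positivity)
  have hq1 : ((K : ℝ) - γ * α) / K ≤ 1 := div_le_one_of_le₀ (by linarith) (by positivity)
  have hij' : (i : ℕ) ≤ j := hij
  exact mul_le_mul_of_nonneg_left (pow_le_pow_of_le_one hq0 hq1 hij') (by positivity)

lemma sum_xi_filter_lt {t : ℕ} (ht : t ≤ K) :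
    ∑ i ∈ univ.filter (fun i : Fin K => (i : ℕ) < t), xi K α γ i =
      ∑ n ∈ range t, 1 / (K : ℝ) * (((K : ℝ) - γ * α) / K) ^ n := by
  rw [sum_filter]
  simp only [xi]
  rw [Fin.sum_univ_eq_sum_range (fun n => if n < t then 1 / (K : ℝ) * (((K : ℝ) - γ * α) / K) ^ n
    else 0) K, ← sum_filter]
  congr 1
  ext n
  simp only [mem_filter, mem_range]
  omega

lemma one_sub_mul_sum_xi_filter_lt (hK : K ≠ 0) {t : ℕ} (ht : t ≤ K) :
    1 - α * γ * ∑ i ∈ univ.filter (fun i : Fin K => (i : ℕ) < t), xi K α γ i =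
      (((K : ℝ) - γ * α) / K) ^ t := by
  have hK0 : (K : ℝ) ≠ 0 := by exact_mod_cast hK
  set q := ((K : ℝ) - γ * α) / K with hq
  have hαγ : α * γ * (1 / K) = 1 - q := by rw [hq]; field_simp; ring
  rw [sum_xi_filter_lt ht, ← mul_sum, ← mul_assoc, hαγ, mul_neg_geom_sum]
  ring

lemma tightF_of_forall_inr_notMem {T : Finset (Fin K ⊕ Fin K)} (hT : ∀ i, Sum.inr i ∉ T) :
    tightF K α γ T = ∑ i ∈ univ.filter (fun i : Fin K => Sum.inl i ∈ T), xi K α γ i := by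
  have hR : univ.filter (fun i : Fin K => Sum.inr i ∈ T) = ∅ := filter_false_of_mem fun i _ => hT i
  simp [tightF, hR, fconv_zero]

lemma tightF_insert_inl_sub {T : Finset (Fin K ⊕ Fin K)} (hT : ∀ i, Sum.inr i ∉ T) {j : Fin K}
    (hj : Sum.inl j ∉ T) :
    tightF K α γ (insert (Sum.inl j) T) - tightF K α γ T = xi K α γ j := by
  have hT' : ∀ i, Sum.inr i ∉ insert (Sum.inl j) T := by simpa using hT
  have hL : univ.filter (fun i : Fin K => Sum.inl i ∈ insert (Sum.inl j) T) =
      insert j (univ.filter fun i : Fin K => Sum.inl i ∈ T) := by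
    ext; simp
  rw [tightF_of_forall_inr_notMem hT', tightF_of_forall_inr_notMem hT, hL,
    sum_insert (by simpa using hj)]
  ring

lemma tightF_insert_inr_sub (hK : K ≠ 1) {T : Finset (Fin K ⊕ Fin K)} (hT : ∀ i, Sum.inr i ∉ T)
    (j : Fin K) :
    tightF K α γ (insert (Sum.inr j) T) - tightF K α γ T =
      (1 - α * γ * ∑ i ∈ univ.filter (fun i : Fin K => Sum.inl i ∈ T), xi K α γ i) / K := by
  have hR : univ.filter (fun i : Fin K => Sum.inr i ∈ insert (Sum.inr j) T) = {j} := by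
    ext; simp [hT]
  have hL : univ.filter (fun i : Fin K => Sum.inl i ∈ insert (Sum.inr j) T) =
      univ.filter fun i : Fin K => Sum.inl i ∈ T := by
    ext; simp
  rw [tightF, hR, hL, card_singleton, Nat.cast_one, fconv_one hK, tightF_of_forall_inr_notMem hT]
  ring

lemma inr_notMem_Schain (K t : ℕ) (i : Fin K) : Sum.inr i ∉ Schain K t := by
  simp [Schain]

lemma inl_mem_Schain {t : ℕ} {i : Fin K} : Sum.inl i ∈ Schain K t ↔ (i : ℕ) < t := by
  simp [Schain]

lemma tightF_Schain (t : ℕ) :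
    tightF K α γ (Schain K t) = ∑ i ∈ univ.filter (fun i : Fin K => (i : ℕ) < t), xi K α γ i := by
  simp_rw [tightF_of_forall_inr_notMem (inr_notMem_Schain K t), inl_mem_Schain]

lemma tightF_insert_inl_Schain_sub {t : ℕ} {j : Fin K} (hj : t ≤ j) :
    tightF K α γ (insert (Sum.inl j) (Schain K t)) - tightF K α γ (Schain K t) = xi K α γ j :=
  tightF_insert_inl_sub (inr_notMem_Schain K t) (by rw [inl_mem_Schain]; omega)

lemma tightF_insert_inr_Schain_sub (hK : K ≠ 1) (t j : Fin K) :
    tightF K α γ (insert (Sum.inr j) (Schain K t)) - tightF K α γ (Schain K t) = xi K α γ t := by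
  simp_rw [tightF_insert_inr_sub hK (inr_notMem_Schain K t), inl_mem_Schain,
    one_sub_mul_sum_xi_filter_lt (Fin.pos t).ne' t.isLt.le, xi]
  ring

lemma tightF_Schain_self (hK : K ≠ 0) (hα : α ≠ 0) (hγ : γ ≠ 0) :
    tightF K α γ (Schain K K) = 1 / (α * γ) * (1 - (((K : ℝ) - α * γ) / K) ^ K) := by
  rw [mul_comm α γ, ← one_sub_mul_sum_xi_filter_lt hK le_rfl, tightF_Schain, mul_comm γ α]
  field_simp
  ring

lemma tightF_image_inr_univ (hK : 1 < K) :
    tightF K α γ (univ.image (Sum.inr : Fin K → Fin K ⊕ Fin K)) = 1 / γ := by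
  have hK0 : (K : ℝ) ≠ 0 := by positivity
  simp only [tightF, mem_image, mem_univ, true_and, Sum.inr.injEq, exists_eq, filter_true,
    card_univ, Fintype.card_fin, fconv_natCast_self hK.ne', reduceCtorEq, exists_false, filter_false,
    sum_empty, mul_zero, sub_zero, mul_one, add_zero]
  field_simp

end

/-- **The greedy algorithm may output `{s_1,…,s_K}` on the tightness function,
matching the approximation guarantee exactly.**
(i) At step `t` (0-indexed), the marginal gain of `s_t` is `ξ_t`, every `ω_j`
also has marginal gain `ξ_t`, and every remaining `s_j` (`j ≥ t`) has marginal
gain `ξ_j ≤ ξ_t`; hence `∅ ⊂ S¹ ⊂ ⋯ ⊂ S^K = {s_1,…,s_K}` is a valid greedy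
sequence. (ii) `F({s_1,…,s_K}) = (1/(αγ))(1 − ((K−αγ)/K)^K)`,
`F({ω_1,…,ω_K}) = 1/γ`, and their ratio is `(1/α)(1 − ((K−αγ)/K)^K)`. -/
theorem tightF_greedy_tightness (K : ℕ) (hK : 2 ≤ K)
    (α γ : ℝ) (hα0 : 0 < α) (hα1 : α ≤ 1) (hγ0 : 0 < γ) (hγ1 : γ ≤ 1) :
    (∀ t : Fin K,
      (tightF K α γ (insert (Sum.inl t) (Schain K t)) - tightF K α γ (Schain K t) =
        xi K α γ t) ∧
      (∀ j : Fin K,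
        tightF K α γ (insert (Sum.inr j) (Schain K t)) - tightF K α γ (Schain K t) =
          xi K α γ t) ∧
      (∀ j : Fin K, t ≤ j →
        tightF K α γ (insert (Sum.inl j) (Schain K t)) - tightF K α γ (Schain K t) =
          xi K α γ j ∧ xi K α γ j ≤ xi K α γ t)) ∧
    (tightF K α γ (Schain K K) =
      (1 / (α * γ)) * (1 - (((K : ℝ) - α * γ) / K) ^ K)) ∧
    (tightF K α γ (Finset.univ.image (Sum.inr : Fin K → Fin K ⊕ Fin K)) = 1 / γ) ∧
    (tightF K α γ (Schain K K) /
        tightF K α γ (Finset.univ.image (Sum.inr : Fin K → Fin K ⊕ Fin K)) =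
      (1 / α) * (1 - (((K : ℝ) - α * γ) / K) ^ K)) := by
  have hγα : γ * α ≤ K :=
    (mul_le_one₀ hγ1 hα0.le hα1).trans (by exact_mod_cast (show 1 ≤ K by omega))
  have hxi : Antitone (xi K α γ) := xi_antitone (by positivity) hγα
  have hS := tightF_Schain_self (K := K) (by omega) hα0.ne' hγ0.ne'
  have hΩ : tightF K α γ (univ.image Sum.inr) = 1 / γ := tightF_image_inr_univ hK
  refine ⟨fun t => ⟨tightF_insert_inl_Schain_sub le_rfl, tightF_insert_inr_Schain_sub (by omega) t,
    fun j hj => ⟨tightF_insert_inl_Schain_sub hj, hxi hj⟩⟩, hS, hΩ, ?_⟩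
  rw [hS, hΩ]
  field_simp
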